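/- Fast proximal gradient (FISTA-type) rate: let g : ℝ^d → ℝ be convex with L-Lipschitz gradient, h ∈ Γ₀(ℝ^d), f = g + h with minimizer x̂, η ∈ (0, 1/L), θ_r = 2/(r+2). Define x⁰ = z⁰, and for r ≥ 0: y^r = (1−θ_r)x^r + θ_r z^r, x^{r+1} = prox_{ηh}(y^r − η∇g(y^r)), z^{r+1} = x^r + (1/θ_r)(x^{r+1} − x^r). Then f(x^{r+1}) − f(x̂) ≤ 2‖x⁰ − x̂‖² / (η (r+2)²). -/

import Mathlib

noncomputable section

/-- Euclidean space `ℝ^d`. -/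
abbrev Euc (d : ℕ) := EuclideanSpace ℝ (Fin d)

/-- `f` is proper: it never takes the value `⊥` and is not identically `+∞`. -/
def ProperF {d : ℕ} (f : Euc d → EReal) : Prop :=
  (∀ x, f x ≠ ⊥) ∧ ∃ x, f x ≠ ⊤

/-- Convexity for extended-real-valued functions on `ℝ^d`. -/
def ConvexF {d : ℕ} (f : Euc d → EReal) : Prop :=
  ∀ x y : Euc d, ∀ t : ℝ, 0 ≤ t → t ≤ 1 →
    f (t • x + (1 - t) • y) ≤ (t : EReal) * f x + ((1 - t : ℝ) : EReal) * f y

/-- `f ∈ Γ₀(ℝ^d)`: proper, convex and lower semicontinuous. -/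
def Gamma0 {d : ℕ} (f : Euc d → EReal) : Prop :=
  ProperF f ∧ ConvexF f ∧ LowerSemicontinuous f

/-- The objective `y ↦ (1/(2λ))‖x - y‖² + f(y)` defining the proximal operator. -/
def proxObj {d : ℕ} (f : Euc d → EReal) (lam : ℝ) (x y : Euc d) : EReal :=
  (((1 / (2 * lam)) * ‖x - y‖ ^ 2 : ℝ) : EReal) + f y

/-!
Every proximal gradient step `p = prox_{ηh}(y - η∇g(y))` with `Lη ≤ 1` satisfies the three-point
inequality `f(p) ≤ f(w) + (‖w - y‖² - ‖w - p‖²)/(2η)` for all `w`: the descent lemma and the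
gradient inequality handle `g`, and the `1/η`-strong convexity of the prox objective handles `h`.
Choosing `w = (1 - θ_r) x^r + θ_r x̂` turns `w - y^r` and `w - x^{r+1}` into `θ_r (x̂ - z^r)` and
`θ_r (x̂ - z^{r+1})`; since `(1 - θ_{r+1})/θ_{r+1}² ≤ 1/θ_r²`, the potential
`(f(x^{r+1}) - f(x̂))/θ_r² + ‖x̂ - z^{r+1}‖²/(2η)` is nonincreasing, and it starts below
`‖x̂ - x⁰‖²/(2η)`.
-/

open scoped RealInnerProductSpace
open Set Filter Topology AffineMap

theorem le_of_forall_mem_Ioc_le_add_mul {a b k : ℝ} (H : ∀ t ∈ Ioc (0 : ℝ) 1, a ≤ b + t * k) :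
    a ≤ b := by
  have hcont : Continuous fun t : ℝ => b + t * k := by fun_prop
  have hlim : Tendsto (fun t => b + t * k) (𝓝[>] 0) (𝓝 b) :=
    (hcont.tendsto' 0 b (by simp)).mono_left nhdsWithin_le_nhds
  exact ge_of_tendsto hlim (by filter_upwards [Ioc_mem_nhdsGT one_pos] with t ht using H t ht)

theorem le_div_sq_of_accelerated_recursion {a N : ℕ → ℝ} {c B : ℝ} (hc : 0 ≤ c)
    (ha : ∀ r, 0 ≤ a r) (hN : ∀ r, 0 ≤ N r) (h0 : a 0 + c * N 0 ≤ B)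
    (hstep : ∀ r : ℕ, a (r + 1) ≤ (1 - 2 / ((r : ℝ) + 3)) * a r
      + (2 / ((r : ℝ) + 3)) ^ 2 * (c * (N r - N (r + 1)))) (r : ℕ) :
    a r ≤ 4 * B / ((r : ℝ) + 2) ^ 2 := by
  have hpot (r : ℕ) : ((r : ℝ) + 2) ^ 2 / 4 * a r + c * N r ≤ B := by
    induction r with
    | zero => norm_num; linarith
    | succ r ih =>
      have hr : (0 : ℝ) < (r : ℝ) + 3 := by positivity
      calc (((r + 1 : ℕ) : ℝ) + 2) ^ 2 / 4 * a (r + 1) + c * N (r + 1)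
          ≤ ((r : ℝ) + 3) ^ 2 / 4 * ((1 - 2 / ((r : ℝ) + 3)) * a r
              + (2 / ((r : ℝ) + 3)) ^ 2 * (c * (N r - N (r + 1)))) + c * N (r + 1) := by
            push_cast
            rw [show (r : ℝ) + 1 + 2 = r + 3 by ring]
            gcongr
            exact hstep r
        _ = ((r : ℝ) + 1) * ((r : ℝ) + 3) / 4 * a r + c * N r := by
            field_simp
            ring
        _ ≤ ((r : ℝ) + 2) ^ 2 / 4 * a r + c * N r := by nlinarith [ha r]
        _ ≤ B := ih
  rw [le_div_iff₀ (by positivity)]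
  nlinarith [hpot r, mul_nonneg hc (hN r)]

theorem norm_sub_smul_add_one_sub_smul_sq {E : Type*} [NormedAddCommGroup E]
    [InnerProductSpace ℝ E] (v a b : E) (t : ℝ) :
    ‖v - (t • a + (1 - t) • b)‖ ^ 2
      = t * ‖v - a‖ ^ 2 + (1 - t) * ‖v - b‖ ^ 2 - t * (1 - t) * ‖a - b‖ ^ 2 := by
  rw [show v - (t • a + (1 - t) • b) = t • (v - a) + (1 - t) • (v - b) by module,
    show a - b = (v - b) - (v - a) by abel, norm_add_sq_real, norm_sub_sq_real (v - b),
    norm_smul, norm_smul, real_inner_smul_left, real_inner_smul_right, mul_pow, mul_pow,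
    Real.norm_eq_abs, Real.norm_eq_abs, sq_abs, sq_abs, real_inner_comm (v - a)]
  ring

section Gradient

variable {E : Type*} [NormedAddCommGroup E] [InnerProductSpace ℝ E] [CompleteSpace E]
  {g : E → ℝ}

theorem HasGradientAt.hasDerivAt_comp_lineMap {g₀ a b : E} {t : ℝ}
    (hg : HasGradientAt g g₀ (lineMap a b t)) :
    HasDerivAt (fun s : ℝ => g (lineMap a b s)) ⟪g₀, b - a⟫ t := by
  simpa [Function.comp_def] using hg.hasFDerivAt.comp_hasDerivAt t hasDerivAt_lineMap

theorem ConvexOn.add_inner_le_of_hasGradientAt (hg : ConvexOn ℝ univ g) {a b g₀ : E}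
    (hga : HasGradientAt g g₀ a) : g a + ⟪g₀, b - a⟫ ≤ g b := by
  have hφ : ConvexOn ℝ univ (g ∘ lineMap a b) := hg.comp_affineMap (lineMap a b)
  have hd : HasDerivAt (fun s : ℝ => g (lineMap a b s)) ⟪g₀, b - a⟫ 0 :=
    HasGradientAt.hasDerivAt_comp_lineMap (by simpa using hga)
  have := hφ.le_slope_of_hasDerivAt (mem_univ 0) (mem_univ 1) one_pos hd
  simp only [slope_def_field, Function.comp_apply, lineMap_apply_one, lineMap_apply_zero, sub_zero,
    div_one] at this
  linarith

theorem le_add_inner_add_sq_of_lipschitz_gradient {g' : E → E} {L : ℝ}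
    (hg : ∀ w, HasGradientAt g (g' w) w)
    (hLip : ∀ w w', ‖g' w - g' w'‖ ≤ L * ‖w - w'‖) (a b : E) :
    g b ≤ g a + ⟪g' a, b - a⟫ + L / 2 * ‖b - a‖ ^ 2 := by
  set v := b - a
  -- the claim is `ψ 1 ≤ ψ 0`, and `ψ' ≤ 0` on `[0, 1]` by the Lipschitz bound on `g'`
  set ψ : ℝ → ℝ := fun t => g (lineMap a b t) - t * ⟪g' a, v⟫ - L / 2 * ‖v‖ ^ 2 * t ^ 2
  have hψ' (t : ℝ) : HasDerivAt ψ (⟪g' (lineMap a b t) - g' a, v⟫ - L * ‖v‖ ^ 2 * t) t := by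
    refine ((((hg (lineMap a b t)).hasDerivAt_comp_lineMap).sub
      ((hasDerivAt_id t).mul_const ⟪g' a, v⟫)).sub
      ((hasDerivAt_pow 2 t).const_mul (L / 2 * ‖v‖ ^ 2))).congr_deriv ?_
    simp only [inner_sub_left, v]
    ring
  have hanti : AntitoneOn ψ (Icc 0 1) := by
    refine antitoneOn_of_hasDerivWithinAt_nonpos (convex_Icc 0 1)
      (fun t _ => (hψ' t).continuousAt.continuousWithinAt)
      (fun t _ => (hψ' t).hasDerivWithinAt) fun t ht => ?_
    rw [interior_Icc] at ht
    rw [sub_nonpos]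
    calc ⟪g' (lineMap a b t) - g' a, v⟫ ≤ ‖g' (lineMap a b t) - g' a‖ * ‖v‖ :=
          real_inner_le_norm _ _
      _ ≤ L * ‖lineMap a b t - a‖ * ‖v‖ := by gcongr; exact hLip _ _
      _ = L * ‖v‖ ^ 2 * t := by
          rw [lineMap_apply_module', add_sub_cancel_right, norm_smul,
            Real.norm_of_nonneg ht.1.le]
          ring
  have := hanti (left_mem_Icc.2 zero_le_one) (right_mem_Icc.2 zero_le_one) zero_le_one
  simp only [lineMap_apply_one, one_mul, one_pow, mul_one, lineMap_apply_zero, zero_mul, sub_zero,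
    ne_eq, OfNat.ofNat_ne_zero, not_false_eq_true, zero_pow, mul_zero, tsub_le_iff_right, ψ, v]
    at this
  linarith

end Gradient

theorem ne_top_of_coe_add_le {a b : ℝ} {u v : EReal} (huv : (a : EReal) + u ≤ b + v)
    (hv : v ≠ ⊤) : u ≠ ⊤ := by
  rintro rfl
  rw [EReal.coe_add_top, top_le_iff] at huv
  exact EReal.add_ne_top (EReal.coe_ne_top b) hv huv

section Prox

variable {d : ℕ} {h : Euc d → EReal}

theorem ConvexF.combo_ne_top_and_toReal_le (hconv : ConvexF h) (hbot : ∀ u, h u ≠ ⊥)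
    {a b : Euc d} (ha : h a ≠ ⊤) (hb : h b ≠ ⊤) {t : ℝ} (ht0 : 0 ≤ t) (ht1 : t ≤ 1) :
    h (t • a + (1 - t) • b) ≠ ⊤ ∧
      (h (t • a + (1 - t) • b)).toReal ≤ t * (h a).toReal + (1 - t) * (h b).toReal := by
  have hle :
      h (t • a + (1 - t) • b) ≤ ((t * (h a).toReal + (1 - t) * (h b).toReal : ℝ) : EReal) := by
    have := hconv a b t ht0 ht1
    rwa [← EReal.coe_toReal ha (hbot a), ← EReal.coe_toReal hb (hbot b), ← EReal.coe_mul,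
      ← EReal.coe_mul, ← EReal.coe_add] at this
  exact ⟨ne_top_of_le_ne_top (EReal.coe_ne_top _) hle,
    (EReal.toReal_le_toReal hle (hbot _) (EReal.coe_ne_top _)).trans_eq (EReal.toReal_coe _)⟩

theorem proxObj_eq_coe (hbot : ∀ u, h u ≠ ⊥) (lam : ℝ) (v : Euc d) {w : Euc d} (hw : h w ≠ ⊤) :
    proxObj h lam v w = ((1 / (2 * lam) * ‖v - w‖ ^ 2 + (h w).toReal : ℝ) : EReal) := by
  rw [proxObj, EReal.coe_add, EReal.coe_toReal hw (hbot w)]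

theorem ne_top_of_forall_proxObj_le {lam : ℝ} {v p : Euc d}
    (hp : ∀ w, proxObj h lam v p ≤ proxObj h lam v w) {w : Euc d} (hw : h w ≠ ⊤) : h p ≠ ⊤ :=
  ne_top_of_coe_add_le (hp w) hw

theorem proxObj_three_point (hconv : ConvexF h) (hbot : ∀ u, h u ≠ ⊥) (lam : ℝ) {v p : Euc d}
    (hp : ∀ w, proxObj h lam v p ≤ proxObj h lam v w) {w : Euc d} (hw : h w ≠ ⊤) :
    1 / (2 * lam) * ‖v - p‖ ^ 2 + (h p).toReal + 1 / (2 * lam) * ‖w - p‖ ^ 2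
      ≤ 1 / (2 * lam) * ‖v - w‖ ^ 2 + (h w).toReal := by
  set c := 1 / (2 * lam)
  have hpt : h p ≠ ⊤ := ne_top_of_forall_proxObj_le hp hw
  -- compare `p` with the points `t w + (1 - t) p` of the segment and let `t → 0`
  refine le_of_forall_mem_Ioc_le_add_mul (k := c * ‖w - p‖ ^ 2) fun t ht => ?_
  obtain ⟨hut, hle⟩ := hconv.combo_ne_top_and_toReal_le hbot hw hpt ht.1.le ht.2
  have hmin := hp (t • w + (1 - t) • p)
  rw [proxObj_eq_coe hbot _ _ hpt, proxObj_eq_coe hbot _ _ hut, EReal.coe_le_coe_iff,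
    norm_sub_smul_add_one_sub_smul_sq] at hmin
  have key : t * (c * ‖v - p‖ ^ 2 + (h p).toReal + c * ‖w - p‖ ^ 2)
      ≤ t * (c * ‖v - w‖ ^ 2 + (h w).toReal + t * (c * ‖w - p‖ ^ 2)) := by
    linarith
  exact le_of_mul_le_mul_left key ht.1

variable {g : Euc d → ℝ} {g' : Euc d → Euc d} {L eta : ℝ}

theorem proxGrad_step_le (hgconv : ConvexOn ℝ univ g) (hgrad : ∀ w, HasGradientAt g (g' w) w)
    (hLip : ∀ w w', ‖g' w - g' w'‖ ≤ L * ‖w - w'‖)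
    (hconv : ConvexF h) (hbot : ∀ u, h u ≠ ⊥) (heta : 0 < eta) (hLeta : L * eta ≤ 1) {y p : Euc d}
    (hp : ∀ w, proxObj h eta (y - eta • g' y) p ≤ proxObj h eta (y - eta • g' y) w)
    {w : Euc d} (hw : h w ≠ ⊤) :
    g p + (h p).toReal ≤ g w + (h w).toReal + 1 / (2 * eta) * (‖w - y‖ ^ 2 - ‖w - p‖ ^ 2) := by
  have hexpand (u : Euc d) : 1 / (2 * eta) * ‖(y - eta • g' y) - u‖ ^ 2
      = 1 / (2 * eta) * ‖u - y‖ ^ 2 + ⟪g' y, u - y⟫ + eta / 2 * ‖g' y‖ ^ 2 := by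
    rw [show (y - eta • g' y) - u = -((u - y) + eta • g' y) by abel, norm_neg, norm_add_sq_real,
      norm_smul, real_inner_smul_right, real_inner_comm, Real.norm_of_nonneg heta.le]
    field_simp
  have hprox := proxObj_three_point hconv hbot eta hp hw
  rw [hexpand, hexpand] at hprox
  have hdescent := le_add_inner_add_sq_of_lipschitz_gradient hgrad hLip y p
  have hsupport := hgconv.add_inner_le_of_hasGradientAt (b := w) (hgrad y)
  have hLc : L / 2 * ‖p - y‖ ^ 2 ≤ 1 / (2 * eta) * ‖p - y‖ ^ 2 := by
    refine mul_le_mul_of_nonneg_right ?_ (sq_nonneg _)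
    rw [div_le_div_iff₀ two_pos (by positivity)]
    linarith
  linarith

theorem fista_step_le (hgconv : ConvexOn ℝ univ g) (hgrad : ∀ w, HasGradientAt g (g' w) w)
    (hLip : ∀ w w', ‖g' w - g' w'‖ ≤ L * ‖w - w'‖)
    (hconv : ConvexF h) (hbot : ∀ u, h u ≠ ⊥) (heta : 0 < eta) (hLeta : L * eta ≤ 1)
    {θ : ℝ} (hθ0 : 0 < θ) (hθ1 : θ ≤ 1)
    {xhat x z y x' z' : Euc d} (hxhat : h xhat ≠ ⊤) (hx : h x ≠ ⊤)
    (hy : y = (1 - θ) • x + θ • z)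
    (hx' : ∀ w, proxObj h eta (y - eta • g' y) x' ≤ proxObj h eta (y - eta • g' y) w)
    (hz' : z' = x + (1 / θ) • (x' - x)) :
    g x' + (h x').toReal ≤ (1 - θ) * (g x + (h x).toReal) + θ * (g xhat + (h xhat).toReal)
      + θ ^ 2 * (1 / (2 * eta) * (‖xhat - z‖ ^ 2 - ‖xhat - z'‖ ^ 2)) := by
  -- compare `x'` with `w = θ x̂ + (1 - θ) x`: then `w - y = θ (x̂ - z)` and `w - x' = θ (x̂ - z')`
  obtain ⟨hw, hhw⟩ := hconv.combo_ne_top_and_toReal_le hbot hxhat hx hθ0.le hθ1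
  have hgw : g (θ • xhat + (1 - θ) • x) ≤ θ * g xhat + (1 - θ) * g x :=
    hgconv.2 (mem_univ _) (mem_univ _) hθ0.le (by linarith) (by ring)
  have hstep := proxGrad_step_le hgconv hgrad hLip hconv hbot heta hLeta hx' hw
  have hwy : θ • xhat + (1 - θ) • x - y = θ • (xhat - z) := by
    rw [hy]; module
  have hwx' : θ • xhat + (1 - θ) • x - x' = θ • (xhat - z') := by
    rw [hz', smul_sub, smul_add, smul_smul, mul_one_div_cancel hθ0.ne', one_smul]; module
  rw [hwy, hwx', norm_smul, norm_smul, Real.norm_of_nonneg hθ0.le, mul_pow, mul_pow] at hstep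
  linarith

theorem fista_objective_le (hgconv : ConvexOn ℝ univ g)
    (hgrad : ∀ w, HasGradientAt g (g' w) w) (hLip : ∀ w w', ‖g' w - g' w'‖ ≤ L * ‖w - w'‖)
    (hconv : ConvexF h) (hbot : ∀ u, h u ≠ ⊥) (heta : 0 < eta) (hLeta : L * eta ≤ 1)
    {xhat : Euc d} (hxhat : h xhat ≠ ⊤)
    (hopt : ∀ w, h w ≠ ⊤ → g xhat + (h xhat).toReal ≤ g w + (h w).toReal)
    {x y z : ℕ → Euc d} (hx0 : x 0 = z 0)
    (hy : ∀ r : ℕ, y r = (1 - 2 / ((r : ℝ) + 2)) • x r + (2 / ((r : ℝ) + 2)) • z r)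
    (hx : ∀ r : ℕ, ∀ w : Euc d,
      proxObj h eta (y r - eta • g' (y r)) (x (r + 1)) ≤ proxObj h eta (y r - eta • g' (y r)) w)
    (hz : ∀ r : ℕ, z (r + 1) = x r + (1 / (2 / ((r : ℝ) + 2))) • (x (r + 1) - x r)) (r : ℕ) :
    g (x (r + 1)) + (h (x (r + 1))).toReal
      ≤ g xhat + (h xhat).toReal + 2 * ‖x 0 - xhat‖ ^ 2 / (eta * ((r : ℝ) + 2) ^ 2) := by
  have hx_top (r : ℕ) : h (x (r + 1)) ≠ ⊤ := ne_top_of_forall_proxObj_le (hx r) hxhat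
  have hθ (r : ℕ) : (2 : ℝ) / (((r + 1 : ℕ) : ℝ) + 2) = 2 / ((r : ℝ) + 3) := by push_cast; ring_nf
  -- `θ₀ = 1`, so `y⁰ = z⁰` and `z¹ = x¹`
  have hbase := proxGrad_step_le hgconv hgrad hLip hconv hbot heta hLeta (hx 0) hxhat
  rw [show y 0 = z 0 by simp [hy 0]] at hbase
  have hz1 : z (0 + 1) = x (0 + 1) := by simp [hz 0]
  have hrate := le_div_sq_of_accelerated_recursion (c := 1 / (2 * eta))
    (a := fun r => g (x (r + 1)) + (h (x (r + 1))).toReal - (g xhat + (h xhat).toReal))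
    (N := fun r => ‖xhat - z (r + 1)‖ ^ 2) (B := 1 / (2 * eta) * ‖xhat - z 0‖ ^ 2)
    (by positivity) (fun r => sub_nonneg.2 (hopt _ (hx_top r))) (fun r => by positivity)
    (by beta_reduce; rw [hz1]; linarith)
    (fun r => by
      have := fista_step_le hgconv hgrad hLip hconv hbot heta hLeta (θ := 2 / ((r : ℝ) + 3))
        (by positivity) (div_le_one_of_le₀ (by linarith) (by positivity)) hxhat (hx_top r)
        ((hy (r + 1)).trans (by rw [hθ])) (hx (r + 1)) ((hz (r + 1)).trans (by rw [hθ]))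
      beta_reduce
      linarith) r
  rw [← hx0, norm_sub_rev] at hrate
  convert (sub_le_iff_le_add').1 hrate using 2
  field_simp
  ring

end Prox

theorem fast_proximal_gradient_rate_general {d : ℕ}
    (g : Euc d → ℝ) (g' : Euc d → Euc d) (L : ℝ)
    (hgconv : ConvexOn ℝ Set.univ g)
    (hgrad : ∀ w, HasGradientAt g (g' w) w)
    (hLip : ∀ w w', ‖g' w - g' w'‖ ≤ L * ‖w - w'‖)
    (h : Euc d → EReal) (hh : Gamma0 h)
    (eta : ℝ) (heta0 : 0 < eta) (heta1 : eta < 1 / L)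
    (xhat : Euc d)
    (hxhat : ∀ w, ((g xhat : ℝ) : EReal) + h xhat ≤ ((g w : ℝ) : EReal) + h w)
    (x y z : ℕ → Euc d) (hx0 : x 0 = z 0)
    (hy : ∀ r : ℕ, y r = (1 - 2 / ((r : ℝ) + 2)) • x r + (2 / ((r : ℝ) + 2)) • z r)
    (hx : ∀ r : ℕ, ∀ w : Euc d,
      proxObj h eta (y r - eta • g' (y r)) (x (r + 1)) ≤
        proxObj h eta (y r - eta • g' (y r)) w)
    (hz : ∀ r : ℕ, z (r + 1) = x r + (1 / (2 / ((r : ℝ) + 2))) • (x (r + 1) - x r)) :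
    ∀ r : ℕ, ((g (x (r + 1)) : ℝ) : EReal) + h (x (r + 1)) ≤
      (((g xhat : ℝ) : EReal) + h xhat) +
        ((2 * ‖x 0 - xhat‖ ^ 2 / (eta * ((r : ℝ) + 2) ^ 2) : ℝ) : EReal) := by
  obtain ⟨⟨hbot, w₀, hw₀⟩, hconv, -⟩ := hh
  have hLeta : L * eta ≤ 1 := by
    rcases le_or_gt L 0 with hL | hL
    · nlinarith
    · linarith [(lt_div_iff₀ hL).1 heta1]
  have hxhat_top : h xhat ≠ ⊤ := ne_top_of_coe_add_le (hxhat w₀) hw₀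
  have hopt (w : Euc d) (hw : h w ≠ ⊤) : g xhat + (h xhat).toReal ≤ g w + (h w).toReal := by
    have := hxhat w
    rwa [← EReal.coe_toReal hxhat_top (hbot _), ← EReal.coe_toReal hw (hbot _),
      ← EReal.coe_add, ← EReal.coe_add, EReal.coe_le_coe_iff] at this
  intro r
  have hx_top : h (x (r + 1)) ≠ ⊤ := ne_top_of_forall_proxObj_le (hx r) hxhat_top
  rw [← EReal.coe_toReal hx_top (hbot _), ← EReal.coe_toReal hxhat_top (hbot _),
    ← EReal.coe_add, ← EReal.coe_add, ← EReal.coe_add, EReal.coe_le_coe_iff]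
  exact fista_objective_le hgconv hgrad hLip hconv hbot heta0 hLeta hxhat_top hopt hx0 hy hx hz r

/-- `O(1/r²)` rate of the fast proximal gradient (FISTA-type) algorithm
with `θ_r = 2/(r+2)` and step size `η ∈ (0, 1/L)`:
`f(x^{r+1}) - f(x̂) ≤ 2‖x⁰ - x̂‖²/(η(r+2)²)` where `f = g + h`. -/
theorem fast_proximal_gradient_rate {d : ℕ}
    (g : Euc d → ℝ) (g' : Euc d → Euc d) (L : ℝ) (hL0 : 0 ≤ L)
    (hgconv : ConvexOn ℝ Set.univ g)
    (hgrad : ∀ w, HasGradientAt g (g' w) w)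
    (hLip : ∀ w w', ‖g' w - g' w'‖ ≤ L * ‖w - w'‖)
    (h : Euc d → EReal) (hh : Gamma0 h)
    (eta : ℝ) (heta0 : 0 < eta) (heta1 : eta < 1 / L)
    (xhat : Euc d)
    (hxhat : ∀ w, ((g xhat : ℝ) : EReal) + h xhat ≤ ((g w : ℝ) : EReal) + h w)
    (x y z : ℕ → Euc d) (hx0 : x 0 = z 0)
    (hy : ∀ r : ℕ, y r = (1 - 2 / ((r : ℝ) + 2)) • x r + (2 / ((r : ℝ) + 2)) • z r)
    (hx : ∀ r : ℕ, ∀ w : Euc d,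
      proxObj h eta (y r - eta • g' (y r)) (x (r + 1)) ≤
        proxObj h eta (y r - eta • g' (y r)) w)
    (hz : ∀ r : ℕ, z (r + 1) = x r + (1 / (2 / ((r : ℝ) + 2))) • (x (r + 1) - x r)) :
    ∀ r : ℕ, ((g (x (r + 1)) : ℝ) : EReal) + h (x (r + 1)) ≤
      (((g xhat : ℝ) : EReal) + h xhat) +
        ((2 * ‖x 0 - xhat‖ ^ 2 / (eta * ((r : ℝ) + 2) ^ 2) : ℝ) : EReal) :=
  fast_proximal_gradient_rate_general g g' L hgconv hgrad hLip h hh eta heta0 heta1 xhat hxhat x y z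
    hx0 hy hx hz
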